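/- Let κ ≥ 0 and suppose ũ₁, ũ₀ : [0,T] → ℝ are continuous with ũ₁(t) ≤ κ(1+t) and ũ₀(t) ≤ κ(1+t) for all t, and q₁⁰ ≤ κ. Then the solution of q₁' = (1/ε)(ũ₁ − q₁) + K₁(ũ₀ − q₁), q₁(0) = q₁⁰, satisfies q₁(t) ≤ κ(1+t) for all t ∈ [0,T]. -/

import Mathlib

/-!
The gap `q₁ - κ(1+t)` starts nonpositive, and, because the barrier `κ(1+t)` dominates both
inputs and grows at rate `κ ≥ 0`, its derivative is at most `-(1/ε + K₁)` times itself.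
Grönwall's inequality with zero initial value then keeps the gap nonpositive.
-/

open Set

theorem nonpos_of_hasDerivAt_le_mul_self {g g' : ℝ → ℝ} {K a b : ℝ}
    (hg : ∀ t ∈ Icc a b, HasDerivAt g (g' t) t) (ha : g a ≤ 0)
    (hbound : ∀ t ∈ Icc a b, g' t ≤ K * g t) :
    ∀ t ∈ Icc a b, g t ≤ 0 := by
  intro t ht
  have hcont : ContinuousOn g (Icc a b) := fun s hs => (hg s hs).continuousAt.continuousWithinAt
  simpa only [gronwallBound_ε0_δ0] using
    le_gronwallBound_of_liminf_deriv_right_le (ε := 0) hcont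
      (fun s hs _ hr => (hg s (Ico_subset_Icc_self hs)).hasDerivWithinAt.liminf_right_slope_le hr)
      ha (fun s hs => by simpa using hbound s (Ico_subset_Icc_self hs)) t ht

theorem le_of_hasDerivAt_sub_le_mul_sub {q q' B B' : ℝ → ℝ} {K a b : ℝ}
    (hq : ∀ t ∈ Icc a b, HasDerivAt q (q' t) t) (hB : ∀ t ∈ Icc a b, HasDerivAt B (B' t) t)
    (ha : q a ≤ B a) (hbound : ∀ t ∈ Icc a b, q' t - B' t ≤ K * (q t - B t)) :
    ∀ t ∈ Icc a b, q t ≤ B t := fun t ht =>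
  sub_nonpos.1 <| nonpos_of_hasDerivAt_le_mul_self (fun s hs => (hq s hs).sub (hB s hs))
    (sub_nonpos.2 ha) hbound t ht

theorem epithelium_linear_growth_bound_general (ε K₁ T κ : ℝ) (hε : 0 < ε) (hK : 0 < K₁)
    (hκ : 0 ≤ κ)
    (u1 u0 : ℝ → ℝ)
    (hb1 : ∀ t ∈ Set.Icc (0:ℝ) T, u1 t ≤ κ * (1 + t))
    (hb0 : ∀ t ∈ Set.Icc (0:ℝ) T, u0 t ≤ κ * (1 + t))
    (q1 : ℝ → ℝ) (hq0 : q1 0 ≤ κ)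
    (hq : ∀ t ∈ Set.Icc (0:ℝ) T,
      HasDerivAt q1 ((1 / ε) * (u1 t - q1 t) + K₁ * (u0 t - q1 t)) t) :
    ∀ t ∈ Set.Icc (0:ℝ) T, q1 t ≤ κ * (1 + t) := by
  have hbarrier (t : ℝ) : HasDerivAt (fun t => κ * (1 + t)) κ t := by
    simpa using ((hasDerivAt_id t).const_add 1).const_mul κ
  refine le_of_hasDerivAt_sub_le_mul_sub (K := -(1 / ε + K₁)) hq (fun t _ => hbarrier t)
    (by simpa using hq0) fun t ht => ?_
  have h1 : 1 / ε * (u1 t - κ * (1 + t)) ≤ 0 :=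
    mul_nonpos_of_nonneg_of_nonpos (by positivity) (sub_nonpos.2 (hb1 t ht))
  have h0 : K₁ * (u0 t - κ * (1 + t)) ≤ 0 :=
    mul_nonpos_of_nonneg_of_nonpos hK.le (sub_nonpos.2 (hb0 t ht))
  linarith

theorem epithelium_linear_growth_bound (ε K₁ T κ : ℝ) (hε : 0 < ε) (hK : 0 < K₁)
    (hT : 0 < T) (hκ : 0 ≤ κ)
    (u1 u0 : ℝ → ℝ) (hu1 : Continuous u1) (hu0 : Continuous u0)
    (hb1 : ∀ t ∈ Set.Icc (0:ℝ) T, u1 t ≤ κ * (1 + t))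
    (hb0 : ∀ t ∈ Set.Icc (0:ℝ) T, u0 t ≤ κ * (1 + t))
    (q1 : ℝ → ℝ) (hq0 : q1 0 ≤ κ)
    (hq : ∀ t ∈ Set.Icc (0:ℝ) T,
      HasDerivAt q1 ((1 / ε) * (u1 t - q1 t) + K₁ * (u0 t - q1 t)) t) :
    ∀ t ∈ Set.Icc (0:ℝ) T, q1 t ≤ κ * (1 + t) :=
  epithelium_linear_growth_bound_general ε K₁ T κ hε hK hκ u1 u0 hb1 hb0 q1 hq0 hq
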